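/- arXiv:2201.07141 — 7 statements merged into one kernel-verified Lean document; each statement's English description precedes it below -/
import Mathlib

section
/- Let Λ be a finite index set equipped with a pseudometric dist, let m ∈ Matrix Λ Λ ℂ, let r ≥ 0, and let ψ ∈ ℂ^Λ. Then one can write m ψ = ψ₁ + ψ₂ where ψ₁ is supported within distance r of supp(ψ), ‖ψ₁‖₂ ≤ ‖m‖ · ‖ψ‖₂, and ‖ψ₂‖₂ ≤ ‖m‖_r · ‖ψ‖₂. -/
/-- The l2 -> l2 operator norm of a matrix. -/
noncomputable def matOpNorm {Λ : Type*} [Fintype Λ] [DecidableEq Λ]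
    (m : Matrix Λ Λ ℂ) : ℝ :=
  ‖Matrix.toEuclideanCLM (𝕜 := ℂ) m‖

/-- The quantity ‖m‖_r : the supremum of |⟨ψ, m φ⟩| over l2-unit vectors ψ, φ whose
supports are at distance greater than r (all pairwise distances exceed r). -/
noncomputable def matDistNorm {Λ : Type*} [Fintype Λ] [DecidableEq Λ]
    [PseudoMetricSpace Λ] (m : Matrix Λ Λ ℂ) (r : ℝ) : ℝ :=
  sSup { x : ℝ | ∃ ψ φ : EuclideanSpace ℂ Λ, ‖ψ‖ = 1 ∧ ‖φ‖ = 1 ∧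
    (∀ i ∈ Function.support ψ, ∀ j ∈ Function.support φ, r < dist i j) ∧
    x = ‖(inner ℂ ψ (Matrix.toEuclideanCLM (𝕜 := ℂ) m φ) : ℂ)‖ }

/-!
Split `m ψ` along the set `S` of sites within distance `r` of `supp ψ`: the restriction to `S`
has norm at most `‖m ψ‖`, and the restriction `ψ₂` to the complement is orthogonal to the rest, so
`‖ψ₂‖² = ⟨ψ₂, m ψ⟩`. Since `supp ψ₂` lies at distance more than `r` from `supp ψ`, this inner
product is at most `‖m‖_r ‖ψ₂‖ ‖ψ‖`.
-/

namespace EuclideanSpace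

variable {𝕜 ι : Type*} [RCLike 𝕜]

noncomputable def restrict (s : Set ι) (x : EuclideanSpace 𝕜 ι) : EuclideanSpace 𝕜 ι :=
  WithLp.toLp 2 (s.indicator x)

@[simp]
lemma restrict_apply (s : Set ι) (x : EuclideanSpace 𝕜 ι) (i : ι) :
    restrict s x i = s.indicator x i :=
  rfl

lemma support_restrict_subset (s : Set ι) (x : EuclideanSpace 𝕜 ι) :
    Function.support (restrict s x) ⊆ s :=
  Set.support_indicator_subset

lemma restrict_add_restrict_compl (s : Set ι) (x : EuclideanSpace 𝕜 ι) :
    restrict s x + restrict sᶜ x = x := by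
  ext i
  simp

variable [Fintype ι]

lemma norm_restrict_le (s : Set ι) (x : EuclideanSpace 𝕜 ι) : ‖restrict s x‖ ≤ ‖x‖ := by
  rw [norm_eq, norm_eq]
  gcongr with i
  simp only [restrict_apply, Set.indicator]
  split_ifs <;> simp

lemma inner_restrict_self (s : Set ι) (x : EuclideanSpace 𝕜 ι) :
    inner 𝕜 (restrict s x) x = (‖restrict s x‖ : 𝕜) ^ 2 := by
  have horth : inner 𝕜 (restrict s x) (restrict sᶜ x) = 0 := by
    rw [PiLp.inner_apply]
    refine Finset.sum_eq_zero fun i _ => ?_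
    by_cases hi : i ∈ s <;> simp [hi]
  calc inner 𝕜 (restrict s x) x
      = inner 𝕜 (restrict s x) (restrict s x + restrict sᶜ x) := by
        rw [restrict_add_restrict_compl]
    _ = (‖restrict s x‖ : 𝕜) ^ 2 := by
        rw [inner_add_right, horth, add_zero, inner_self_eq_norm_sq_to_K]

end EuclideanSpace

open Function Metric EuclideanSpace

section DistNorm

variable {Λ : Type*} [Fintype Λ] [DecidableEq Λ] [PseudoMetricSpace Λ]

lemma matDistNorm_nonneg (m : Matrix Λ Λ ℂ) (r : ℝ) : 0 ≤ matDistNorm m r := by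
  apply Real.sSup_nonneg
  rintro x ⟨a, b, -, -, -, rfl⟩
  exact norm_nonneg _

lemma norm_inner_le_matDistNorm_of_norm_eq_one (m : Matrix Λ Λ ℂ) (r : ℝ)
    {χ φ : EuclideanSpace ℂ Λ} (hχ : ‖χ‖ = 1) (hφ : ‖φ‖ = 1)
    (hsep : ∀ i ∈ support χ, ∀ j ∈ support φ, r < dist i j) :
    ‖inner ℂ χ (Matrix.toEuclideanCLM (𝕜 := ℂ) m φ)‖ ≤ matDistNorm m r := by
  refine le_csSup ⟨matOpNorm m, ?_⟩ ⟨χ, φ, hχ, hφ, hsep, rfl⟩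
  rintro _ ⟨a, b, ha, hb, -, rfl⟩
  calc _ ≤ ‖a‖ * ‖Matrix.toEuclideanCLM (𝕜 := ℂ) m b‖ := norm_inner_le_norm _ _
    _ ≤ ‖a‖ * (matOpNorm m * ‖b‖) := by gcongr; exact ContinuousLinearMap.le_opNorm _ _
    _ = matOpNorm m := by rw [ha, hb, one_mul, mul_one]

lemma norm_inner_toEuclideanCLM_le_matDistNorm (m : Matrix Λ Λ ℂ) (r : ℝ)
    {χ φ : EuclideanSpace ℂ Λ} (hsep : ∀ i ∈ support χ, ∀ j ∈ support φ, r < dist i j) :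
    ‖inner ℂ χ (Matrix.toEuclideanCLM (𝕜 := ℂ) m φ)‖ ≤ matDistNorm m r * ‖χ‖ * ‖φ‖ := by
  rcases eq_or_ne χ 0 with rfl | hχ
  · simp
  rcases eq_or_ne φ 0 with rfl | hφ
  · simp
  have hsmul (c : ℂ) (x : EuclideanSpace ℂ Λ) : support (c • x) ⊆ support x :=
    support_const_smul_subset c x.ofLp
  have hunit := norm_inner_le_matDistNorm_of_norm_eq_one m r (norm_smul_inv_norm hχ)
    (norm_smul_inv_norm hφ) fun i hi j hj => hsep i (hsmul _ _ hi) j (hsmul _ _ hj)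
  rw [map_smul, inner_smul_left, inner_smul_right, norm_mul, norm_mul, RCLike.norm_conj] at hunit
  simp only [norm_inv, RCLike.norm_ofReal, abs_norm] at hunit
  have hχpos : 0 < ‖χ‖ := norm_pos_iff.2 hχ
  have hφpos : 0 < ‖φ‖ := norm_pos_iff.2 hφ
  calc ‖inner ℂ χ (Matrix.toEuclideanCLM (𝕜 := ℂ) m φ)‖
      = ‖χ‖ * ‖φ‖ * (‖χ‖⁻¹ * (‖φ‖⁻¹ * ‖inner ℂ χ (Matrix.toEuclideanCLM (𝕜 := ℂ) m φ)‖)) := by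
        field_simp
    _ ≤ ‖χ‖ * ‖φ‖ * matDistNorm m r := by gcongr
    _ = matDistNorm m r * ‖χ‖ * ‖φ‖ := by ring

end DistNorm

theorem exists_near_far_decomposition_general
    {Λ : Type*} [Fintype Λ] [DecidableEq Λ] [PseudoMetricSpace Λ]
    (m : Matrix Λ Λ ℂ) (r : ℝ) (ψ : EuclideanSpace ℂ Λ) :
    ∃ ψ₁ ψ₂ : EuclideanSpace ℂ Λ,
      Matrix.toEuclideanCLM (𝕜 := ℂ) m ψ = ψ₁ + ψ₂ ∧
      (∀ i ∈ Function.support ψ₁, Metric.infDist i (Function.support ψ) ≤ r) ∧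
      ‖ψ₁‖ ≤ matOpNorm m * ‖ψ‖ ∧
      ‖ψ₂‖ ≤ matDistNorm m r * ‖ψ‖ := by
  set T := Matrix.toEuclideanCLM (𝕜 := ℂ) m
  set S := {i | infDist i (support ψ) ≤ r}
  set ψ₂ := restrict Sᶜ (T ψ)
  refine ⟨restrict S (T ψ), ψ₂, (restrict_add_restrict_compl S (T ψ)).symm,
    fun i hi => support_restrict_subset S _ hi, (norm_restrict_le S _).trans (T.le_opNorm ψ), ?_⟩
  have hsep : ∀ i ∈ support ψ₂, ∀ j ∈ support ψ, r < dist i j := fun i hi j hj =>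
    have hfar : r < infDist i (support ψ) := not_le.1 (support_restrict_subset Sᶜ _ hi)
    hfar.trans_le (infDist_le_dist_of_mem hj)
  have hsq : ‖ψ₂‖ ^ 2 ≤ matDistNorm m r * ‖ψ₂‖ * ‖ψ‖ := by
    simpa only [ψ₂, T, inner_restrict_self, norm_pow, RCLike.norm_ofReal, abs_norm] using
      norm_inner_toEuclideanCLM_le_matDistNorm m r hsep
  rcases (norm_nonneg ψ₂).eq_or_lt with h0 | hpos
  · rw [← h0]
    exact mul_nonneg (matDistNorm_nonneg m r) (norm_nonneg ψ)
  · nlinarith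

/-- Decomposition of the vector m ψ into a part supported within distance r of the
support of ψ and a far part of small norm. -/
theorem exists_near_far_decomposition
    {Λ : Type*} [Fintype Λ] [DecidableEq Λ] [PseudoMetricSpace Λ]
    (m : Matrix Λ Λ ℂ) (r : ℝ) (hr : 0 ≤ r) (ψ : EuclideanSpace ℂ Λ) :
    ∃ ψ₁ ψ₂ : EuclideanSpace ℂ Λ,
      Matrix.toEuclideanCLM (𝕜 := ℂ) m ψ = ψ₁ + ψ₂ ∧
      (∀ i ∈ Function.support ψ₁, Metric.infDist i (Function.support ψ) ≤ r) ∧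
      ‖ψ₁‖ ≤ matOpNorm m * ‖ψ‖ ∧
      ‖ψ₂‖ ≤ matDistNorm m r * ‖ψ‖ :=
  exists_near_far_decomposition_general m r ψ
end

section
/- Let n be a positive integer and let v ∈ Matrix (Fin n) (Fin n) ℂ be fixed. If h : ℝ → Matrix (Fin n) (Fin n) ℂ is differentiable and satisfies the double bracket flow equation ∂_B h(B) = 4[[v, h(B)], h(B)], then for every natural number m the function B ↦ Tr(h(B)^m) is constant. -/
/-!
Along the flow, `d/dB Tr(h^m) = m Tr(h^(m-1) h')` by cyclicity of the trace. Since `h^(m-1)`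
commutes with `h`, the product `h^(m-1) [w, h]` equals the commutator `[h^(m-1) w, h]`, which is
traceless; so every trace power has zero derivative.
-/

attribute [local instance] Matrix.frobeniusNormedRing Matrix.frobeniusNormedAlgebra

theorem Commute.mul_lie_eq_lie_mul {R : Type*} [Ring R] {a b : R} (hab : Commute a b) (c : R) :
    b * ⁅c, a⁆ = ⁅b * c, a⁆ := by
  rw [Ring.lie_def, Ring.lie_def, mul_sub, ← mul_assoc, ← mul_assoc, ← mul_assoc, hab.eq]

theorem Matrix.trace_pow_mul_lie_self {n R : Type*} [Fintype n] [DecidableEq n] [CommRing R]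
    (a w : Matrix n n R) (k : ℕ) : (a ^ k * ⁅w, a⁆).trace = 0 := by
  rw [(Commute.self_pow a k).mul_lie_eq_lie_mul]
  exact LieAlgebra.matrix_trace_commutator_zero _ _ _ _

theorem HasDerivAt.matrix_trace_pow {n 𝕜 : Type*} [Fintype n] [DecidableEq n] [RCLike 𝕜]
    {f : ℝ → Matrix n n 𝕜} {f' : Matrix n n 𝕜} {x : ℝ} (hf : HasDerivAt f f' x) (m : ℕ) :
    HasDerivAt (fun x => (f x ^ m).trace) (m * (f x ^ (m - 1) * f').trace) x := by
  let trace : Matrix n n 𝕜 →L[ℝ] 𝕜 :=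
    ((Matrix.traceLinearMap n 𝕜 𝕜).restrictScalars ℝ).toContinuousLinearMap
  refine (trace.hasFDerivAt.comp_hasDerivAt x (hf.pow' m)).congr_deriv ?_
  have hterm : ∀ i ∈ Finset.range m,
      (f x ^ (m.pred - i) * f' * f x ^ i).trace = (f x ^ (m - 1) * f').trace := by
    intro i hi
    rw [Matrix.trace_mul_cycle, ← pow_add, Nat.pred_eq_sub_one,
      Nat.add_sub_of_le (Nat.le_sub_one_of_lt (Finset.mem_range.mp hi))]
  change (∑ i ∈ Finset.range m, f x ^ (m.pred - i) * f' * f x ^ i).trace = _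
  rw [Matrix.trace_sum, Finset.sum_congr rfl hterm, Finset.sum_const, Finset.card_range,
    nsmul_eq_mul]

theorem trace_pow_constant_of_doubleBracketFlow_general
    (n : ℕ) (v : Matrix (Fin n) (Fin n) ℂ)
    (h : ℝ → Matrix (Fin n) (Fin n) ℂ)
    (hderiv : ∀ B, HasDerivAt h ((4 : ℂ) • ⁅⁅v, h B⁆, h B⁆) B)
    (m : ℕ) :
    ∀ B : ℝ, (h B ^ m).trace = (h 0 ^ m).trace := by
  have hconst : ∀ B, HasDerivAt (fun B => (h B ^ m).trace) 0 B := fun B => by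
    simpa only [mul_smul_comm, Matrix.trace_smul, Matrix.trace_pow_mul_lie_self, smul_zero,
      mul_zero] using (hderiv B).matrix_trace_pow m
  exact fun B => is_const_of_deriv_eq_zero (fun x => (hconst x).differentiableAt)
    (fun x => (hconst x).deriv) B 0

/-- The double bracket flow preserves all trace powers (spectral invariants). -/
theorem trace_pow_constant_of_doubleBracketFlow
    (n : ℕ) (hn : 0 < n) (v : Matrix (Fin n) (Fin n) ℂ)
    (h : ℝ → Matrix (Fin n) (Fin n) ℂ)
    (hderiv : ∀ B, HasDerivAt h ((4 : ℂ) • ⁅⁅v, h B⁆, h B⁆) B)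
    (m : ℕ) :
    ∀ B : ℝ, (h B ^ m).trace = (h 0 ^ m).trace :=
  trace_pow_constant_of_doubleBracketFlow_general n v h hderiv m
end

section
/- Let n be a positive integer and let H, V ∈ Matrix (Fin n) (Fin n) ℂ be Hermitian. Then [[V, H], H] = 0 if and only if [V, H] = 0. (In particular, the stationary points of the double bracket flow ∂_B H = [[V, H], H] are exactly the Hermitian matrices commuting with V.) -/
open Matrix
open scoped ComplexOrder

lemma lie_mem_skewAdjoint {A : Type*} [NonUnitalRing A] [StarRing A] {a b : A}
    (ha : IsSelfAdjoint a) (hb : IsSelfAdjoint b) : ⁅a, b⁆ ∈ skewAdjoint A := by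
  rw [skewAdjoint.mem_iff, Ring.lie_def, star_sub, star_mul, star_mul, ha.star_eq, hb.star_eq,
    neg_sub]

namespace Matrix

variable {n R : Type*} [Fintype n] [CommRing R]

lemma trace_lie_mul (A B C : Matrix n n R) : trace (⁅A, B⁆ * C) = trace (A * ⁅B, C⁆) := by
  simp only [Ring.lie_def, sub_mul, mul_sub, trace_sub, mul_assoc]
  rw [trace_mul_comm B (A * C), mul_assoc]

/-- For Hermitian `H` and `V`, the double bracket flow increases `Tr (V H)` at the rate
`‖[V, H]‖²`. -/
lemma trace_conjTranspose_lie_mul_lie [StarRing R] {H V : Matrix n n R}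
    (hH : H.IsHermitian) (hV : V.IsHermitian) :
    trace (⁅V, H⁆ᴴ * ⁅V, H⁆) = trace (V * ⁅⁅V, H⁆, H⁆) := by
  have hskew : ⁅V, H⁆ᴴ = -⁅V, H⁆ :=
    skewAdjoint.mem_iff.mp (lie_mem_skewAdjoint hV.isSelfAdjoint hH.isSelfAdjoint)
  rw [hskew, neg_mul, trace_neg, trace_lie_mul, ← trace_neg, ← mul_neg]
  simp only [Ring.lie_def, neg_sub]

end Matrix

theorem doubleBracket_eq_zero_iff_commute_general
    (n : ℕ) (H V : Matrix (Fin n) (Fin n) ℂ)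
    (hH : H.IsHermitian) (hV : V.IsHermitian) :
    ⁅⁅V, H⁆, H⁆ = 0 ↔ ⁅V, H⁆ = 0 := by
  refine ⟨fun h => ?_, fun h => by rw [h, Ring.lie_def, zero_mul, mul_zero, sub_zero]⟩
  rw [← trace_conjTranspose_mul_self_eq_zero_iff, trace_conjTranspose_lie_mul_lie hH hV, h,
    mul_zero, trace_zero]

/-- Fixed points of the double bracket flow among Hermitian matrices:
[[V,H],H] = 0 iff [V,H] = 0. -/
theorem doubleBracket_eq_zero_iff_commute
    (n : ℕ) (hn : 0 < n) (H V : Matrix (Fin n) (Fin n) ℂ)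
    (hH : H.IsHermitian) (hV : V.IsHermitian) :
    ⁅⁅V, H⁆, H⁆ = 0 ↔ ⁅V, H⁆ = 0 :=
  doubleBracket_eq_zero_iff_commute_general n H V hH hV
end

section
/- Let n be a positive integer and let H, V, η ∈ Matrix (Fin n) (Fin n) ℂ with H, V Hermitian and η anti-Hermitian (η† = −η). Then the first-order variation of the potential under the infinitesimal unitary change H ↦ (1 + sη) H (1 + sη)⁻¹, namely d/ds at s = 0 of Tr((e^{sη} H e^{−sη} − V)²), equals −2 Tr([η, H] V) = −2 Tr(η [H, V]). -/
/-!
Write `H(s) = exp(sη) H exp(-sη) - V`. Its derivative at `0` is `⁅η, H⁆`, so the derivative of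
`Tr(H(s)²)` at `0` is `2 Tr(⁅η, H⁆ (H - V))`. The term `Tr(⁅η, H⁆ H) = Tr(η ⁅H, H⁆)` vanishes by
cyclicity of the trace, which leaves `-2 Tr(⁅η, H⁆ V)`; cyclicity once more moves the commutator
onto `H` and `V`.
-/

open scoped Matrix

attribute [local instance] Matrix.frobeniusNormedAddCommGroup Matrix.frobeniusNormedSpace

open NormedSpace

attribute [local instance] Matrix.frobeniusNormedRing Matrix.frobeniusNormedAlgebra

theorem Matrix.trace_lie_mul_s11 {m R : Type*} [Fintype m] [CommRing R] (A B C : Matrix m m R) :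
    (⁅A, B⁆ * C).trace = (A * ⁅B, C⁆).trace := by
  simp only [Ring.lie_def, Matrix.sub_mul, Matrix.mul_sub, Matrix.trace_sub, Matrix.mul_assoc]
  rw [Matrix.trace_mul_comm B (A * C), Matrix.mul_assoc]

theorem Matrix.trace_lie_mul_self {m R : Type*} [Fintype m] [CommRing R]
    (A B : Matrix m m R) : (⁅A, B⁆ * B).trace = 0 := by
  rw [Matrix.trace_lie_mul_s11, Ring.lie_def, sub_self, Matrix.mul_zero, Matrix.trace_zero]

theorem hasDerivAt_exp_smul_mul_mul_exp_neg_smul {𝔸 : Type*} [NormedRing 𝔸] [NormedAlgebra ℝ 𝔸]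
    [CompleteSpace 𝔸] (η H : 𝔸) :
    HasDerivAt (fun s : ℝ => exp (s • η) * H * exp (-s • η)) ⁅η, H⁆ 0 := by
  have hexp := hasDerivAt_exp_smul_const' η (0 : ℝ)
  have hexp_neg : HasDerivAt (fun s : ℝ => exp (-s • η)) (-η * exp ((0 : ℝ) • -η)) 0 := by
    simpa only [smul_neg, neg_smul] using hasDerivAt_exp_smul_const' (-η) (0 : ℝ)
  simpa [Ring.lie_def, sub_eq_add_neg] using (hexp.mul_const H).fun_mul hexp_neg

section MatrixTrace

variable {𝕜 m : Type*} [NontriviallyNormedField 𝕜] [Fintype m]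

variable (𝕜 m) in
def Matrix.traceCLM (R : Type*) [NormedAddCommGroup R] [NormedSpace 𝕜 R] :
    Matrix m m R →L[𝕜] R where
  toLinearMap := Matrix.traceLinearMap m 𝕜 R
  cont := continuous_id.matrix_trace

theorem HasDerivAt.matrix_trace {R : Type*} [NormedAddCommGroup R] [NormedSpace 𝕜 R]
    {f : 𝕜 → Matrix m m R} {f' : Matrix m m R} {x : 𝕜} (hf : HasDerivAt f f' x) :
    HasDerivAt (fun s => (f s).trace) f'.trace x :=
  (Matrix.traceCLM 𝕜 m R).hasFDerivAt.comp_hasDerivAt x hf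

theorem HasDerivAt.matrix_trace_sq {R : Type*} [RCLike R] [NormedAlgebra 𝕜 R] [DecidableEq m]
    {f : 𝕜 → Matrix m m R} {f' : Matrix m m R} {x : 𝕜} (hf : HasDerivAt f f' x) :
    HasDerivAt (fun s => (f s ^ 2).trace) (2 * (f' * f x).trace) x := by
  have h := (hf.fun_mul hf).matrix_trace
  rw [Matrix.trace_add, Matrix.trace_mul_comm (f x), ← two_mul] at h
  simpa only [sq] using h

end MatrixTrace

theorem firstVariation_of_potential_general
    (n : ℕ) (H V η : Matrix (Fin n) (Fin n) ℂ) :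
    HasDerivAt
      (fun s : ℝ =>
        ((exp ((s : ℂ) • η) * H * exp (-(s : ℂ) • η) - V) ^ 2).trace)
      (-2 * (⁅η, H⁆ * V).trace) 0 ∧
    -2 * (⁅η, H⁆ * V).trace = -2 * (η * ⁅H, V⁆).trace := by
  refine ⟨?_, by rw [Matrix.trace_lie_mul_s11]⟩
  have hreal_smul (s : ℝ) : exp ((s : ℂ) • η) * H * exp (-(s : ℂ) • η) - V =
      exp (s • η) * H * exp (-s • η) - V := by
    rw [← Complex.ofReal_neg, Complex.coe_smul, Complex.coe_smul]
  simp only [hreal_smul]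
  have hconj := (hasDerivAt_exp_smul_mul_mul_exp_neg_smul η H).sub_const V
  refine hconj.matrix_trace_sq.congr_deriv ?_
  simp [Matrix.mul_sub, Matrix.trace_lie_mul_self]

/-- First variation of the potential Tr((e^{sη} H e^{-sη} - V)^2) at s = 0. -/
theorem firstVariation_of_potential
    (n : ℕ) (hn : 0 < n) (H V η : Matrix (Fin n) (Fin n) ℂ)
    (hH : H.IsHermitian) (hV : V.IsHermitian) (hη : ηᴴ = -η) :
    HasDerivAt
      (fun s : ℝ =>
        ((exp ((s : ℂ) • η) * H * exp (-(s : ℂ) • η) - V) ^ 2).trace)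
      (-2 * (⁅η, H⁆ * V).trace) 0 ∧
    -2 * (⁅η, H⁆ * V).trace = -2 * (η * ⁅H, V⁆).trace :=
  firstVariation_of_potential_general n H V η
end

section
/- Let Λ be a finite index set equipped with a pseudometric dist, let R, J > 0, and let h ∈ Matrix Λ Λ ℂ with ‖h‖ ≤ J and h_{ij} = 0 whenever dist(i, j) > R. Then for every τ ≥ 0, every natural number M, and all unit vectors ψ, φ ∈ ℂ^Λ whose supports are at distance greater than M R, one has |⟨ψ, exp(τ h) φ⟩| ≤ ∑_{m=M+1}^∞ (τ J)^m / m!. In particular, for M large compared to τ J this is exponentially small in M, so imaginary-time evolution generated by a quadratic (free-fermion) Hamiltonian spreads at most linearly, up to exponentially small error, within distance O(R τ J). -/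
/-!
The exponential series `exp (τ h) = ∑ (τ h)ⁿ / n!` is transported to operators on `ℓ²(Λ)`.
Since `h` has range `R`, the entries of `hⁿ` vanish at distance greater than `n R`, so the
terms with `n ≤ M` pair `ψ` with `φ` to zero. Each remaining term is bounded by
`‖τ h‖ⁿ / n! ≤ (τ J)ⁿ / n!`, which leaves exactly the tail of the exponential series.
-/

open NormedSpace

theorem NormedSpace.norm_apply_exp_le_of_apply_pow_eq_zero {𝕂 𝔸 F : Type*} [RCLike 𝕂]
    [NormedRing 𝔸] [NormedAlgebra 𝕂 𝔸] [CompleteSpace 𝔸]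
    [NormedAddCommGroup F] [NormedSpace 𝕂 F]
    (L : 𝔸 →L[𝕂] F) {a : 𝔸} {r : ℝ} (ha : ‖a‖ ≤ r) {M : ℕ}
    (hL : ∀ n ≤ M, L (a ^ n) = 0) :
    ‖L (exp a)‖ ≤ ‖L‖ * ∑' m : ℕ, r ^ (M + 1 + m) / (M + 1 + m).factorial := by
  set term : ℕ → F := fun n => L (((n.factorial : 𝕂)⁻¹) • a ^ n)
  have hexp : HasSum term (L (exp a)) := by
    rw [exp_eq_tsum 𝕂]
    exact (expSeries_summable' a).hasSum.map L L.continuous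
  have htail : HasSum (fun m => term (M + 1 + m)) (L (exp a)) := by
    have hhead : ∑ n ∈ Finset.range (M + 1), term n = 0 :=
      Finset.sum_eq_zero fun n hn => by
        simp [term, hL n (Nat.lt_succ_iff.mp (Finset.mem_range.mp hn))]
    simpa [add_comm, hhead] using (hasSum_nat_add_iff' (M + 1)).2 hexp
  have hbound :
      ∀ m, ‖term (M + 1 + m)‖ ≤ ‖L‖ * (r ^ (M + 1 + m) / (M + 1 + m).factorial) := by
    intro m
    set n := M + 1 + m
    calc ‖term n‖ ≤ ‖L‖ * ‖((n.factorial : 𝕂)⁻¹) • a ^ n‖ := L.le_opNorm _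
      _ ≤ ‖L‖ * (r ^ n / n.factorial) := by
        gcongr
        rw [norm_smul, norm_inv, RCLike.norm_natCast, inv_mul_eq_div]
        gcongr
        exact (norm_pow_le' a (by omega)).trans (pow_le_pow_left₀ (norm_nonneg a) ha n)
  have hsummable : Summable fun m : ℕ => r ^ (M + 1 + m) / (M + 1 + m).factorial := by
    simpa [add_comm] using (summable_nat_add_iff (M + 1)).2 (Real.summable_pow_div_factorial r)
  exact htail.norm_le_of_bounded (hsummable.hasSum.mul_left ‖L‖) hbound

namespace Matrix

variable {Λ : Type*} [Fintype Λ] [DecidableEq Λ]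

theorem pow_apply_eq_zero_of_lt_dist [PseudoMetricSpace Λ] {α : Type*} [Semiring α]
    {h : Matrix Λ Λ α} {R : ℝ} (hrange : ∀ i j, R < dist i j → h i j = 0)
    (n : ℕ) {i j : Λ} (hij : n * R < dist i j) : (h ^ n) i j = 0 := by
  induction n generalizing j with
  | zero =>
    have hne : i ≠ j := by
      rintro rfl
      simp at hij
    simp [one_apply_ne hne]
  | succ n ih =>
    rw [pow_succ, mul_apply]
    refine Finset.sum_eq_zero fun k _ => ?_
    by_cases hik : n * R < dist i k
    · rw [ih hik, zero_mul]
    · have hkj : R < dist k j := by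
        push_cast at hij
        linarith [dist_triangle i k j]
      rw [hrange k j hkj, mul_zero]

theorem inner_toEuclideanCLM_eq_zero {𝕜 : Type*} [RCLike 𝕜] (m : Matrix Λ Λ 𝕜)
    {ψ φ : EuclideanSpace 𝕜 Λ}
    (hm : ∀ i ∈ Function.support ψ, ∀ j ∈ Function.support φ, m i j = 0) :
    inner 𝕜 ψ (toEuclideanCLM (𝕜 := 𝕜) m φ) = 0 := by
  rw [PiLp.inner_apply]
  refine Finset.sum_eq_zero fun i _ => ?_
  by_cases hψi : ψ i = 0
  · simp [hψi]
  rw [ofLp_toEuclideanCLM, mulVec, dotProduct, Finset.sum_eq_zero, inner_zero_right]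
  intro j _
  by_cases hφj : φ j = 0
  · simp [hφj]
  · rw [hm i hψi j hφj, zero_mul]

theorem toEuclideanCLM_exp {𝕜 : Type*} [RCLike 𝕜] (m : Matrix Λ Λ 𝕜) :
    toEuclideanCLM (𝕜 := 𝕜) (exp m) = exp (toEuclideanCLM (𝕜 := 𝕜) m) := by
  let _ : NormedRing (Matrix Λ Λ 𝕜) := instL2OpNormedRing
  let _ : NormedAlgebra 𝕜 (Matrix Λ Λ 𝕜) := instL2OpNormedAlgebra
  let _ : NormedAlgebra ℚ (Matrix Λ Λ 𝕜) := NormedAlgebra.restrictScalars ℚ 𝕜 _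
  exact map_exp toEuclideanCLM
    (toEuclideanCLM (n := Λ) (𝕜 := 𝕜)).toAlgEquiv.toLinearMap.continuous_of_finiteDimensional m

end Matrix

theorem exp_matrix_locality_bound_general
    {Λ : Type*} [Fintype Λ] [DecidableEq Λ] [PseudoMetricSpace Λ]
    (R J : ℝ) (hR : 0 < R)
    (h : Matrix Λ Λ ℂ) (hnorm : matOpNorm h ≤ J)
    (hrange : ∀ i j, R < dist i j → h i j = 0)
    (τ : ℝ) (hτ : 0 ≤ τ) (M : ℕ)
    (ψ φ : EuclideanSpace ℂ Λ) (hψ : ‖ψ‖ = 1) (hφ : ‖φ‖ = 1)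
    (hsupp : ∀ i ∈ Function.support ψ, ∀ j ∈ Function.support φ,
      (M : ℝ) * R < dist i j) :
    ‖(inner ℂ ψ (Matrix.toEuclideanCLM (𝕜 := ℂ) (exp ((τ : ℂ) • h)) φ) : ℂ)‖ ≤
      ∑' m : ℕ, (τ * J) ^ (M + 1 + m) / Nat.factorial (M + 1 + m) := by
  set A := (τ : ℂ) • Matrix.toEuclideanCLM (𝕜 := ℂ) h
  let pairing := (innerSL ℂ ψ).comp (ContinuousLinearMap.apply ℂ (EuclideanSpace ℂ Λ) φ)
  have hpairing : ‖pairing‖ ≤ 1 :=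
    pairing.opNorm_le_bound zero_le_one fun T =>
      calc ‖inner ℂ ψ (T φ)‖ ≤ ‖ψ‖ * ‖T φ‖ := norm_inner_le_norm ψ (T φ)
        _ ≤ ‖ψ‖ * (‖T‖ * ‖φ‖) := by gcongr; exact T.le_opNorm φ
        _ = 1 * ‖T‖ := by rw [hψ, hφ]; ring
  have hA : ‖A‖ ≤ τ * J := by
    rw [norm_smul, Complex.norm_real, Real.norm_of_nonneg hτ]
    exact mul_le_mul_of_nonneg_left hnorm hτ
  have hlocal : ∀ n ≤ M, pairing (A ^ n) = 0 := by
    intro n hn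
    have hsep : ∀ i ∈ Function.support ψ, ∀ j ∈ Function.support φ, (h ^ n) i j = 0 :=
      fun i hi j hj => Matrix.pow_apply_eq_zero_of_lt_dist hrange n <|
        lt_of_le_of_lt (mul_le_mul_of_nonneg_right (by exact_mod_cast hn) hR.le)
          (hsupp i hi j hj)
    simp [pairing, A, smul_pow, ← map_pow, Matrix.inner_toEuclideanCLM_eq_zero _ hsep]
  have hτJ : 0 ≤ τ * J := (norm_nonneg A).trans hA
  rw [Matrix.toEuclideanCLM_exp, map_smul]
  calc ‖pairing (exp A)‖ ≤ ‖pairing‖ * _ :=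
        norm_apply_exp_le_of_apply_pow_eq_zero pairing hA hlocal
    _ ≤ _ := mul_le_of_le_one_left
        (tsum_nonneg fun m => div_nonneg (pow_nonneg hτJ _) (Nat.cast_nonneg _)) hpairing

open NormedSpace in
/-- Locality bound for imaginary-time free-fermion evolution: the matrix elements of
exp(τ h) between unit vectors supported at distance greater than M·R are bounded by
the tail ∑_{m ≥ M+1} (τJ)^m / m! of the exponential series. -/
theorem exp_matrix_locality_bound
    {Λ : Type*} [Fintype Λ] [DecidableEq Λ] [PseudoMetricSpace Λ]
    (R J : ℝ) (hR : 0 < R) (hJ : 0 < J)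
    (h : Matrix Λ Λ ℂ) (hnorm : matOpNorm h ≤ J)
    (hrange : ∀ i j, R < dist i j → h i j = 0)
    (τ : ℝ) (hτ : 0 ≤ τ) (M : ℕ)
    (ψ φ : EuclideanSpace ℂ Λ) (hψ : ‖ψ‖ = 1) (hφ : ‖φ‖ = 1)
    (hsupp : ∀ i ∈ Function.support ψ, ∀ j ∈ Function.support φ,
      (M : ℝ) * R < dist i j) :
    ‖(inner ℂ ψ (Matrix.toEuclideanCLM (𝕜 := ℂ) (exp ((τ : ℂ) • h)) φ) : ℂ)‖ ≤
      ∑' m : ℕ, (τ * J) ^ (M + 1 + m) / Nat.factorial (M + 1 + m) :=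
  exp_matrix_locality_bound_general R J hR h hnorm hrange τ hτ M ψ φ hψ hφ hsupp
end

section
/- Let n be a positive integer. Define the 2×2 complex matrices Z := diag(1, −1), a := the matrix with (a)_{01} = 1 and all other entries 0 (i.e. a = |0⟩⟨1|), a† its conjugate transpose, and 1 the identity. Work with matrices indexed by (Fin n → Fin 2) (n qubits). Let O : Fin n → Matrix (Fin 2) (Fin 2) ℂ with each O_j ∈ {1, Z, a, a†}, and define the tensor-product matrix P by P(x, y) := ∏_j O_j(x_j, y_j). Define V by V(x, y) := ∑_j Z(x_j, y_j) ∏_{k ≠ j} (if x_k = y_k then 1 else 0), i.e. V is the sum over sites of Pauli Z. Let q := #{j : O_j = a} − #{j : O_j = a†}. Then [V, P] = 2q · P, and consequently [[V, P], V] = −4q² · P. -/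
/-!
On the computational basis `V = ∑ⱼ Zⱼ` is diagonal, with eigenvalue `∑ⱼ Z(xⱼ, xⱼ)` at `x`, so
`[V, P]` multiplies the entry `P x y` by the difference of the eigenvalues at `x` and `y`.
Whenever `P x y ≠ 0`, every site contributes to that difference `0` for the factors `1` and `Z`
(they are diagonal), `2` for `a` and `-2` for `a†`, so the difference is `2q`.
The double commutator then follows formally: `[[V, P], V] = 2q [P, V] = -(2q)² P`.
-/

open scoped Matrix

open Finset

theorem Ring.lie_lie_eq_neg_sq_smul {R A : Type*} [CommRing R] [Ring A] [Algebra R A]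
    {x y : A} {c : R} (h : ⁅x, y⁆ = c • y) : ⁅⁅x, y⁆, x⁆ = -c ^ 2 • y := by
  rw [h, Ring.lie_def, smul_mul_assoc, mul_smul_comm, ← smul_sub, ← neg_sub, ← Ring.lie_def, h,
    smul_neg, smul_smul, neg_smul, sq]

namespace Matrix

variable {ι R : Type*} [Fintype ι] [DecidableEq ι] [CommRing R]

theorem lie_diagonal_apply (d : ι → R) (M : Matrix ι ι R) (i j : ι) :
    ⁅diagonal d, M⁆ i j = (d i - d j) * M i j := by
  rw [Ring.lie_def, sub_apply, diagonal_mul, mul_diagonal]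
  ring

theorem lie_diagonal_eq_smul {d : ι → R} {M : Matrix ι ι R} {c : R}
    (h : ∀ i j, M i j ≠ 0 → d i - d j = c) : ⁅diagonal d, M⁆ = c • M := by
  ext i j
  rw [lie_diagonal_apply, smul_apply, smul_eq_mul]
  by_cases hM : M i j = 0
  · simp [hM]
  · rw [h i j hM]

end Matrix

section Sites

variable {ι σ R : Type*} [Fintype ι] [CommRing R]

theorem sum_site_eq_diagonal [DecidableEq ι] [DecidableEq σ] {Z : Matrix σ σ R} (hZ : Z.IsDiag)
    (x y : ι → σ) :
    ∑ j, Z (x j) (y j) * ∏ k ∈ univ.erase j, (if x k = y k then (1 : R) else 0) =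
      Matrix.diagonal (fun x => ∑ j, Z (x j) (x j)) x y := by
  by_cases hxy : x = y
  · subst hxy
    simp
  · obtain ⟨k, hk⟩ := Function.ne_iff.mp hxy
    rw [Matrix.diagonal_apply_ne _ hxy]
    refine sum_eq_zero fun j _ => ?_
    by_cases hj : j = k
    · rw [hj, hZ hk, zero_mul]
    · rw [prod_eq_zero (mem_erase.mpr ⟨Ne.symm hj, mem_univ k⟩) (if_neg hk), mul_zero]

theorem sum_sub_sum_eq_of_prod_ne_zero {O : ι → Matrix σ σ R} {z : σ → R} {c : ι → R}
    (hc : ∀ j u v, O j u v ≠ 0 → z u - z v = c j) {x y : ι → σ}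
    (h : ∏ j, O j (x j) (y j) ≠ 0) :
    ∑ j, z (x j) - ∑ j, z (y j) = ∑ j, c j := by
  rw [← sum_sub_distrib]
  exact sum_congr rfl fun j _ => hc j _ _ fun h0 => h (prod_eq_zero (mem_univ j) h0)

end Sites

theorem isDiag_pauliZ : (!![1, 0; 0, -1] : Matrix (Fin 2) (Fin 2) ℂ).IsDiag := by
  intro i j hij
  fin_cases i <;> fin_cases j <;> simp_all

theorem qubit_diag_sub_eq_charge {Z a O : Matrix (Fin 2) (Fin 2) ℂ}
    (hZ : Z = !![1, 0; 0, -1]) (ha : a = !![0, 1; 0, 0])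
    (hO : O = 1 ∨ O = Z ∨ O = a ∨ O = aᴴ) {u v : Fin 2} (h : O u v ≠ 0) :
    Z u u - Z v v = 2 * ((if O = a then 1 else 0) - (if O = aᴴ then 1 else 0)) := by
  subst hZ ha
  rcases hO with rfl | rfl | rfl | rfl <;> fin_cases u <;> fin_cases v <;>
    simp [← Matrix.ext_iff, Fin.forall_fin_two] at h ⊢ <;> norm_num

open Finset in
theorem charge_eigenoperator_general
    (n : ℕ)
    (Z a : Matrix (Fin 2) (Fin 2) ℂ)
    (hZ : Z = !![1, 0; 0, -1]) (ha : a = !![0, 1; 0, 0])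
    (O : Fin n → Matrix (Fin 2) (Fin 2) ℂ)
    (hO : ∀ j, O j = 1 ∨ O j = Z ∨ O j = a ∨ O j = aᴴ)
    (P V : Matrix (Fin n → Fin 2) (Fin n → Fin 2) ℂ)
    (hP : ∀ x y, P x y = ∏ j, O j (x j) (y j))
    (hV : ∀ x y, V x y = ∑ j, Z (x j) (y j) *
      ∏ k ∈ Finset.univ.erase j, (if x k = y k then (1 : ℂ) else 0))
    (q : ℤ)
    (hq : q = ((Finset.univ.filter fun j => O j = a).card : ℤ) -
      ((Finset.univ.filter fun j => O j = aᴴ).card : ℤ)) :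
    ⁅V, P⁆ = ((2 * q : ℤ) : ℂ) • P ∧
    ⁅⁅V, P⁆, V⁆ = ((-4 * q ^ 2 : ℤ) : ℂ) • P := by
  have hVd : V = Matrix.diagonal fun x => ∑ j, Z (x j) (x j) := by
    ext x y
    rw [hV, sum_site_eq_diagonal (hZ ▸ isDiag_pauliZ)]
  have hVP : ⁅V, P⁆ = ((2 * q : ℤ) : ℂ) • P := by
    rw [hVd]
    refine Matrix.lie_diagonal_eq_smul fun x y hxy => ?_
    rw [hP] at hxy
    rw [sum_sub_sum_eq_of_prod_ne_zero (z := fun u => Z u u)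
        (fun j _ _ => qubit_diag_sub_eq_charge hZ ha (hO j)) hxy,
      ← mul_sum, sum_sub_distrib, sum_boole, sum_boole, hq]
    push_cast
    ring
  refine ⟨hVP, ?_⟩
  rw [Ring.lie_lie_eq_neg_sq_smul hVP]
  congr 1
  push_cast
  ring

open Finset in
/-- A product of single-site operators drawn from {1, Z, a, a†} on n qubits is an
eigenoperator of commutation with V = ∑_j Z_j, with eigenvalue 2q where q is the
charge; hence an eigenoperator of Δ ↦ [[V,Δ],V] with eigenvalue -4q². -/
theorem charge_eigenoperator
    (n : ℕ) (hn : 0 < n)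
    (Z a : Matrix (Fin 2) (Fin 2) ℂ)
    (hZ : Z = !![1, 0; 0, -1]) (ha : a = !![0, 1; 0, 0])
    (O : Fin n → Matrix (Fin 2) (Fin 2) ℂ)
    (hO : ∀ j, O j = 1 ∨ O j = Z ∨ O j = a ∨ O j = aᴴ)
    (P V : Matrix (Fin n → Fin 2) (Fin n → Fin 2) ℂ)
    (hP : ∀ x y, P x y = ∏ j, O j (x j) (y j))
    (hV : ∀ x y, V x y = ∑ j, Z (x j) (y j) *
      ∏ k ∈ Finset.univ.erase j, (if x k = y k then (1 : ℂ) else 0))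
    (q : ℤ)
    (hq : q = ((Finset.univ.filter fun j => O j = a).card : ℤ) -
      ((Finset.univ.filter fun j => O j = aᴴ).card : ℤ)) :
    ⁅V, P⁆ = ((2 * q : ℤ) : ℂ) • P ∧
    ⁅⁅V, P⁆, V⁆ = ((-4 * q ^ 2 : ℤ) : ℂ) • P :=
  charge_eigenoperator_general n Z a hZ ha O hO P V hP hV q hq
end

section
/- Let A be an associative ring which is also a ℂ-algebra, let ι be a finite index set, and let γ : ι → A satisfy the Majorana anticommutation relations γ_i γ_j + γ_j γ_i = 2 δ_{ij} · 1 for all i, j. Let h, v ∈ Matrix ι ι ℂ be antisymmetric (hᵀ = −h, vᵀ = −v), and set H := ∑_{i,j} h_{ij} γ_i γ_j and V := ∑_{i,j} v_{ij} γ_i γ_j. Then [H, V] = ∑_{i,j} (4 [h, v])_{ij} γ_i γ_j; that is, the commutator of two quadratic Majorana Hamiltonians is again quadratic, with single-particle matrix 4[h, v]. -/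
/-!
Commuting a quadratic element with a single generator gives, by the anticommutation relations,
`⁅γ a * γ b, γ c⁆ = 2 δ_bc γ a - 2 δ_ac γ b`, so `⁅H, ·⁆` maps the span of the generators to itself
through the matrix `2 (h - hᵀ) = 4 h`. Since `⁅H, ·⁆` is a derivation,
`⁅H, γ c * γ d⁆ = ⁅H, γ c⁆ * γ d + γ c * ⁅H, γ d⁆`, and collecting coefficients in `⁅H, V⁆` gives
the matrix `(4 h) v + v (4 h)ᵀ = 4 (h v - v h)`.
-/

open scoped Matrix

theorem Ring.lie_mul {A : Type*} [Ring A] (x y z : A) :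
    ⁅x, y * z⁆ = ⁅x, y⁆ * z + y * ⁅x, z⁆ := by
  simp only [Ring.lie_def]
  noncomm_ring

namespace Majorana

attribute [local instance] LieRing.ofAssociativeRing LieAlgebra.ofAssociativeAlgebra

theorem lie_mul_generator {A : Type*} [Ring A] {ι : Type*} [DecidableEq ι] {γ : ι → A}
    (hγ : ∀ i j, γ i * γ j + γ j * γ i = if i = j then (2 : A) else 0) (a b c : ι) :
    ⁅γ a * γ b, γ c⁆ = γ a * (if b = c then 2 else 0) - (if a = c then 2 else 0) * γ b := by
  rw [← hγ, ← hγ, Ring.lie_def]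
  noncomm_ring

variable {A : Type*} [Ring A] [Algebra ℂ A] {ι : Type*} [Fintype ι]

def quadratic (γ : ι → A) (M : Matrix ι ι ℂ) : A :=
  ∑ i, ∑ j, M i j • (γ i * γ j)

theorem quadratic_add (γ : ι → A) (M N : Matrix ι ι ℂ) :
    quadratic γ (M + N) = quadratic γ M + quadratic γ N := by
  simp only [quadratic, Matrix.add_apply, add_smul, Finset.sum_add_distrib]

theorem lie_quadratic (γ : ι → A) (x : A) (M : Matrix ι ι ℂ) :
    ⁅x, quadratic γ M⁆ = ∑ c, ∑ d, M c d • (⁅x, γ c⁆ * γ d + γ c * ⁅x, γ d⁆) := by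
  simp only [quadratic, lie_sum, lie_smul, Ring.lie_mul]

theorem sum_smul_linear_mul (γ : ι → A) (M N : Matrix ι ι ℂ) :
    ∑ c, ∑ d, N c d • ((∑ a, M a c • γ a) * γ d) = quadratic γ (M * N) := by
  simp only [quadratic, Matrix.mul_apply, Finset.sum_mul, Finset.smul_sum, Finset.sum_smul,
    smul_mul_assoc, smul_smul]
  rw [Finset.sum_comm_cycle]
  exact Finset.sum_congr rfl fun a _ => Finset.sum_comm.trans <|
    Finset.sum_congr rfl fun d _ => Finset.sum_congr rfl fun c _ => by rw [mul_comm]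

theorem sum_smul_mul_linear (γ : ι → A) (M N : Matrix ι ι ℂ) :
    ∑ c, ∑ d, N c d • (γ c * ∑ a, M a d • γ a) = quadratic γ (N * Mᵀ) := by
  simp only [quadratic, Matrix.mul_apply, Matrix.transpose_apply, Finset.mul_sum,
    Finset.smul_sum, Finset.sum_smul, mul_smul_comm, smul_smul]
  exact Finset.sum_congr rfl fun c _ => Finset.sum_comm

theorem lie_quadratic_generator [DecidableEq ι] {γ : ι → A}
    (hγ : ∀ i j, γ i * γ j + γ j * γ i = if i = j then (2 : A) else 0)
    (h : Matrix ι ι ℂ) (c : ι) :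
    ⁅quadratic γ h, γ c⁆ = ∑ a, ((2 : ℂ) • (h - hᵀ)) a c • γ a := by
  simp only [quadratic, sum_lie, smul_lie, lie_mul_generator hγ, mul_ite, ite_mul, mul_zero,
    zero_mul, smul_sub, smul_ite, smul_zero, Finset.sum_sub_distrib, Finset.sum_ite_eq',
    Finset.sum_ite_irrel, Finset.sum_const_zero, Finset.mem_univ, if_true]
  rw [← Finset.sum_sub_distrib]
  refine Finset.sum_congr rfl fun a _ => ?_
  simp only [Matrix.sub_apply, Matrix.add_apply, Matrix.transpose_apply, two_smul, mul_two,
    two_mul, smul_add, add_smul, sub_smul]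

end Majorana

open Majorana

theorem commutator_of_quadratic_majorana_general
    {A : Type*} [Ring A] [Algebra ℂ A]
    {ι : Type*} [Fintype ι] [DecidableEq ι]
    (γ : ι → A)
    (hγ : ∀ i j, γ i * γ j + γ j * γ i = if i = j then (2 : A) else 0)
    (h v : Matrix ι ι ℂ) (hh : hᵀ = -h) :
    ⁅∑ i, ∑ j, h i j • (γ i * γ j), ∑ i, ∑ j, v i j • (γ i * γ j)⁆ =
      ∑ i, ∑ j, ((4 : ℂ) • ⁅h, v⁆) i j • (γ i * γ j) := by
  have h_two_smul : (2 : ℂ) • (h - hᵀ) = (4 : ℂ) • h := by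
    rw [hh, sub_neg_eq_add, ← two_smul ℂ h, smul_smul]
    norm_num
  have h_generator (c : ι) : ⁅quadratic γ h, γ c⁆ = ∑ a, ((4 : ℂ) • h) a c • γ a := by
    rw [lie_quadratic_generator hγ, h_two_smul]
  show ⁅quadratic γ h, quadratic γ v⁆ = quadratic γ ((4 : ℂ) • ⁅h, v⁆)
  calc ⁅quadratic γ h, quadratic γ v⁆
      = quadratic γ ((4 : ℂ) • h * v) + quadratic γ (v * ((4 : ℂ) • h)ᵀ) := by
        simp only [lie_quadratic, h_generator, smul_add, Finset.sum_add_distrib,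
          sum_smul_linear_mul, sum_smul_mul_linear]
    _ = quadratic γ ((4 : ℂ) • ⁅h, v⁆) := by
        rw [← quadratic_add, Matrix.transpose_smul, hh, Ring.lie_def, Matrix.smul_mul,
          Matrix.mul_smul, Matrix.mul_neg, smul_neg, smul_sub, sub_eq_add_neg]

/-- The commutator of two quadratic Majorana Hamiltonians is quadratic, with
single-particle matrix 4[h,v]. -/
theorem commutator_of_quadratic_majorana
    {A : Type*} [Ring A] [Algebra ℂ A]
    {ι : Type*} [Fintype ι] [DecidableEq ι]
    (γ : ι → A)
    (hγ : ∀ i j, γ i * γ j + γ j * γ i = if i = j then (2 : A) else 0)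
    (h v : Matrix ι ι ℂ) (hh : hᵀ = -h) (hv : vᵀ = -v) :
    ⁅∑ i, ∑ j, h i j • (γ i * γ j), ∑ i, ∑ j, v i j • (γ i * γ j)⁆ =
      ∑ i, ∑ j, ((4 : ℂ) • ⁅h, v⁆) i j • (γ i * γ j) :=
  commutator_of_quadratic_majorana_general γ hγ h v hh
end
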